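/- Let n ≥ 1 and let f : ℝⁿ → ℝ be continuously differentiable with gradient g. Fix s ∈ (0,1], ρ ∈ (0,1), σ ∈ (0,1/2), an integer N ≥ 1, and weights η_k ∈ [0,1). Let x_{k+1} = x_k + α_k d_k, where α_k = s ρ^{j_k} and j_k is the smallest j ∈ ℕ with f(x_k + s ρ^j d_k) ≤ T_k + σ s ρ^j ⟨g(x_k), d_k⟩; here f_k = f(x_k), f_{l(k)} = max_{0≤j≤min(k,N)} f_{k−j}, T̄_0 = f_0, T̄_k = (1−η_{k−1}) f_k + η_{k−1} T̄_{k−1} for 1 ≤ k ≤ N−1, T̄_k = Σ_{j=0}^{N−1}(η_{k−1}⋯η_{k−j})(1−η_{k−j−1}) f_{k−j} + (η_{k−1}⋯η_{k−N}) f_{k−N} for k ≥ N, and T_k = f_{l(k)} for k ≤ N−1, T_k = max{T̄_k, f_k} for k ≥ N. Assume (H1) the level set L(x_0) = {x ∈ ℝⁿ : f(x) ≤ f(x_0)} is bounded; (H2) there exist an open convex set C ⊇ L(x_0) and L > 0 with ‖g(x) − g(y)‖ ≤ L‖x − y‖ for all x, y ∈ C; (H3) there exist 0 < c₁ < 1 <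 c₂ with ⟨g(x_k), d_k⟩ ≤ −c₁‖g(x_k)‖² and ‖d_k‖ ≤ c₂‖g(x_k)‖ for all k; and g(x_k) ≠ 0 for all k. Then no cluster point x* of the sequence {x_k} is a local maximizer of f, i.e., there is no neighborhood U of x* on which f(y) ≤ f(x*) for all y ∈ U. -/

import Mathlib

/-!
Write `M k` for the maximum of `f` over the window `x (k - min k N), …, x k` (the paper's
`f_{l(k)}`). The reference value `T k` is a convex combination of values in that window, so the
Armijo test gives `f (x (k + 1)) + δ k ≤ M k` with `δ k = σ c₁ α k ‖g (x k)‖² > 0`. Hence `M`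
is nonincreasing, drops strictly over every `N + 1` steps, and the iterates stay in the compact
level set. The argument of Grippo, Lampariello and Lucidi (walk backwards from the index `l k`
where `M k` is attained, using uniform continuity of `f` and `‖x (k + 1) - x k‖² ≤ B δ k`)
shows `δ k → 0`, so `x (l k)` clusters wherever `x k` does. At a cluster point `a` we get
`f a ≤ inf M < M k = f (x (l k))` for all `k`, so `a` is not a local maximum.
-/

open Filter Topology Finset
open scoped Uniformity

noncomputable def windowMax (u : ℕ → ℝ) (N k : ℕ) : ℝ :=
  (range (min k N + 1)).sup' nonempty_range_add_one fun j => u (k - j)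

section windowMax

variable {u δ : ℕ → ℝ} {N : ℕ}

theorem le_windowMax {j k : ℕ} (hj : j ≤ min k N) : u (k - j) ≤ windowMax u N k :=
  le_sup' (fun j => u (k - j)) (mem_range.2 (Nat.lt_succ_of_le hj))

theorem self_le_windowMax (k : ℕ) : u k ≤ windowMax u N k :=
  le_windowMax (j := 0) (Nat.zero_le _)

theorem windowMax_zero : windowMax u N 0 = u 0 := by
  simp [windowMax]

theorem exists_windowMax_eq (k : ℕ) :
    ∃ i, i ≤ k ∧ k ≤ i + N ∧ windowMax u N k = u i := by
  obtain ⟨j, hj, hmax⟩ := exists_mem_eq_sup' nonempty_range_add_one fun j => u (k - j)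
  have := mem_range.1 hj
  exact ⟨k - j, by omega, by omega, hmax⟩

theorem windowMax_succ_le (hdesc : ∀ k, u (k + 1) + δ k ≤ windowMax u N k)
    (hδ : ∀ k, 0 ≤ δ k) (k : ℕ) : windowMax u N (k + 1) ≤ windowMax u N k := by
  refine sup'_le _ _ fun j hj => ?_
  rcases j with _ | j
  · rw [Nat.sub_zero]
    linarith [hdesc k, hδ k]
  · rw [Nat.add_sub_add_right]
    exact le_windowMax (by have := mem_range.1 hj; omega)

theorem antitone_windowMax (hdesc : ∀ k, u (k + 1) + δ k ≤ windowMax u N k)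
    (hδ : ∀ k, 0 ≤ δ k) : Antitone (windowMax u N) :=
  antitone_nat_of_succ_le (windowMax_succ_le hdesc hδ)

theorem windowMax_add_lt (hdesc : ∀ k, u (k + 1) + δ k ≤ windowMax u N k)
    (hδ : ∀ k, 0 < δ k) (k : ℕ) : windowMax u N (k + N + 1) < windowMax u N k := by
  obtain ⟨i, -, hi, heq⟩ := exists_windowMax_eq (u := u) (N := N) (k + N + 1)
  obtain ⟨m, rfl⟩ : ∃ m, i = m + 1 := ⟨i - 1, by omega⟩
  calc windowMax u N (k + N + 1) = u (m + 1) := heq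
    _ < windowMax u N m := by linarith [hdesc m, hδ m]
    _ ≤ windowMax u N k := antitone_windowMax hdesc (fun k => (hδ k).le) (by omega)

end windowMax

theorem sum_prod_mul_one_sub_add_prod (e : ℕ → ℝ) (m : ℕ) :
    ∑ j ∈ range m, (∏ i ∈ range j, e i) * (1 - e j) + ∏ i ∈ range m, e i = 1 := by
  induction m with
  | zero => simp
  | succ m ih => rw [sum_range_succ, prod_range_succ]; linear_combination ih

theorem sum_prod_mul_one_sub_mul_add_prod_mul_le {e a : ℕ → ℝ} {m : ℕ} {b : ℝ}
    (he : ∀ i, e i ∈ Set.Icc 0 1) (ha : ∀ j ≤ m, a j ≤ b) :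
    ∑ j ∈ range m, (∏ i ∈ range j, e i) * (1 - e j) * a j + (∏ i ∈ range m, e i) * a m
      ≤ b := by
  have hP : ∀ j, 0 ≤ ∏ i ∈ range j, e i := fun j => prod_nonneg fun i _ => (he i).1
  calc _ ≤ ∑ j ∈ range m, (∏ i ∈ range j, e i) * (1 - e j) * b
        + (∏ i ∈ range m, e i) * b := by
        gcongr with j hj
        · exact mul_nonneg (hP j) (sub_nonneg.2 (he j).2)
        · exact ha j (mem_range.1 hj).le
        · exact hP m
        · exact ha m le_rfl
    _ = b := by rw [← sum_mul, ← add_mul, sum_prod_mul_one_sub_add_prod, one_mul]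

theorem reference_le_windowMax {u η Tbar T : ℕ → ℝ} {N : ℕ}
    (hη : ∀ k, η k ∈ Set.Ico (0 : ℝ) 1)
    (hTsum : ∀ k, N ≤ k → Tbar k =
      (∑ j ∈ range N, (∏ i ∈ range j, η (k - 1 - i)) * (1 - η (k - j - 1)) * u (k - j))
        + (∏ i ∈ range N, η (k - 1 - i)) * u (k - N))
    (hTlt : ∀ k, k ≤ N - 1 → T k = windowMax u N k)
    (hTge : ∀ k, N ≤ k → T k = max (Tbar k) (u k)) (k : ℕ) : T k ≤ windowMax u N k := by
  rcases lt_or_ge k N with hk | hk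
  · exact (hTlt k (by omega)).le
  rw [hTge k hk, hTsum k hk]
  refine max_le ?_ (self_le_windowMax k)
  simp_rw [Nat.sub_right_comm k _ 1]
  exact sum_prod_mul_one_sub_mul_add_prod_mul_le (e := fun i => η (k - 1 - i))
    (a := fun j => u (k - j)) (fun i => Set.Ico_subset_Icc_self (hη _))
    fun j hj => le_windowMax (by omega)

theorem UniformContinuousOn.tendsto_dist_of_tendsto_dist {α β ι : Type*} [PseudoMetricSpace α]
    [PseudoMetricSpace β] {f : α → β} {S : Set α} {l : Filter ι} {a b : ι → α}
    (hf : UniformContinuousOn f S) (ha : ∀ i, a i ∈ S) (hb : ∀ i, b i ∈ S)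
    (hab : Tendsto (fun i => dist (a i) (b i)) l (𝓝 0)) :
    Tendsto (fun i => dist (f (a i)) (f (b i))) l (𝓝 0) := by
  have hpair : Tendsto (fun i => (a i, b i)) l (𝓤 α ⊓ 𝓟 (S ×ˢ S)) :=
    tendsto_inf.2 ⟨tendsto_uniformity_iff_dist_tendsto_zero.2 hab,
      tendsto_principal.2 (Eventually.of_forall fun i => ⟨ha i, hb i⟩)⟩
  exact tendsto_uniformity_iff_dist_tendsto_zero.1 (Tendsto.comp hf hpair)

theorem tendsto_dist_succ_of_sq_le {α ι : Type*} [PseudoMetricSpace α] {x : ℕ → α}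
    {δ : ℕ → ℝ} {B : ℝ} (hstep : ∀ k, dist (x k) (x (k + 1)) ^ 2 ≤ B * δ k)
    {l : Filter ι} {φ : ι → ℕ} (hφ : Tendsto (δ ∘ φ) l (𝓝 0)) :
    Tendsto (fun i => dist (x (φ i)) (x (φ i + 1))) l (𝓝 0) := by
  have hsqrt : Tendsto (fun i => √(B * δ (φ i))) l (𝓝 0) := by
    simpa using (hφ.const_mul B).sqrt
  exact squeeze_zero (fun _ => dist_nonneg) (fun i => Real.le_sqrt_of_sq_le (hstep _)) hsqrt

theorem tendsto_dist_of_tendsto_dist_succ {α : Type*} [PseudoMetricSpace α] {x : ℕ → α}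
    {l : ℕ → ℕ} {N : ℕ} (hx : Tendsto (fun k => dist (x k) (x (k + 1))) atTop (𝓝 0))
    (hl_le : ∀ k, l k ≤ k) (hl_ge : ∀ k, k ≤ l k + N) :
    Tendsto (fun k => dist (x (l k)) (x k)) atTop (𝓝 0) := by
  have hsum :
      Tendsto (fun k => ∑ i ∈ range N, dist (x (k + i)) (x (k + i + 1))) atTop (𝓝 0) := by
    simpa using tendsto_finsetSum _ fun i _ => hx.comp (tendsto_add_atTop_nat i)
  rw [← tendsto_add_atTop_iff_nat N]
  refine squeeze_zero (fun _ => dist_nonneg) (fun k => ?_) hsum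
  calc dist (x (l (k + N))) (x (k + N))
      ≤ ∑ i ∈ Ico (l (k + N)) (k + N), dist (x i) (x (i + 1)) :=
        dist_le_Ico_sum_dist x (hl_le _)
    _ ≤ ∑ i ∈ Ico k (k + N), dist (x i) (x (i + 1)) :=
        sum_le_sum_of_subset_of_nonneg (Ico_subset_Ico (by linarith [hl_ge (k + N)]) le_rfl)
          fun _ _ _ => dist_nonneg
    _ = ∑ i ∈ range N, dist (x (k + i)) (x (k + i + 1)) := by
        rw [sum_Ico_eq_sum_range, Nat.add_sub_cancel_left]

theorem MapClusterPt.of_tendsto_dist {α ι : Type*} [PseudoMetricSpace α] {l : Filter ι}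
    {x y : ι → α} {a : α} (ha : MapClusterPt a l x)
    (hxy : Tendsto (fun i => dist (y i) (x i)) l (𝓝 0)) : MapClusterPt a l y := by
  rw [Metric.nhds_basis_ball.mapClusterPt_iff_frequently] at ha ⊢
  intro ε hε
  refine ((ha (ε / 2) (half_pos hε)).and_eventually
    (hxy.eventually_lt_const (half_pos hε))).mono fun i ⟨hx, hyx⟩ => ?_
  rw [Metric.mem_ball] at hx ⊢
  linarith [dist_triangle (y i) (x i) a]

theorem tendsto_comp_zero_of_tendsto_windowMax {u δ : ℕ → ℝ} {N : ℕ} {F : ℝ}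
    (hδ : ∀ k, 0 ≤ δ k) (hdesc : ∀ k, u (k + 1) + δ k ≤ windowMax u N k)
    (hMF : Tendsto (windowMax u N) atTop (𝓝 F)) {φ : ℕ → ℕ} (hφ : Tendsto φ atTop atTop)
    (huφ : Tendsto (fun k => u (φ k + 1)) atTop (𝓝 F)) : Tendsto (δ ∘ φ) atTop (𝓝 0) := by
  have hgap := (hMF.comp hφ).sub huφ
  rw [sub_self] at hgap
  refine squeeze_zero (fun k => hδ _) (fun k => ?_) hgap
  simp only [Function.comp_apply]
  linarith [hdesc (φ k)]

theorem tendsto_zero_of_nonmonotone_descent {u δ : ℕ → ℝ} {N : ℕ} (hδ : ∀ k, 0 ≤ δ k)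
    (hdesc : ∀ k, u (k + 1) + δ k ≤ windowMax u N k) (hu : BddBelow (Set.range u))
    (hcont : ∀ φ : ℕ → ℕ, Tendsto (δ ∘ φ) atTop (𝓝 0) →
      Tendsto (fun k => dist (u (φ k)) (u (φ k + 1))) atTop (𝓝 0)) :
    Tendsto δ atTop (𝓝 0) := by
  obtain ⟨b, hb⟩ := hu
  obtain ⟨F, hMF⟩ : ∃ F, Tendsto (windowMax u N) atTop (𝓝 F) :=
    ⟨_, tendsto_atTop_ciInf (antitone_windowMax hdesc hδ)
      ⟨b, Set.forall_mem_range.2 fun k => (hb ⟨k, rfl⟩).trans (self_le_windowMax k)⟩⟩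
  choose l hl_le hl_ge hl_eq using exists_windowMax_eq (u := u) (N := N)
  have hφ : ∀ j, Tendsto (fun k => l k - (j + 1)) atTop atTop := fun j =>
    tendsto_atTop_mono (fun k => show k - (N + (j + 1)) ≤ l k - (j + 1) by have := hl_ge k; omega)
      (tendsto_sub_atTop_nat (N + (j + 1)))
  have hsucc : ∀ j, (fun k => u (l k - j)) =ᶠ[atTop] fun k => u (l k - (j + 1) + 1) := fun j =>
    eventually_atTop.2 ⟨N + j + 1, fun k hk => by have := hl_ge k; dsimp only; congr 1; omega⟩
  have hconv : ∀ j, Tendsto (fun k => u (l k - j)) atTop (𝓝 F) := by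
    intro j
    induction j with
    | zero => simpa [← hl_eq] using hMF
    | succ j ih =>
      have hnext := ih.congr' (hsucc j)
      have hδj := tendsto_comp_zero_of_tendsto_windowMax hδ hdesc hMF (hφ j) hnext
      exact (tendsto_iff_of_dist (hcont _ hδj)).2 hnext
  have hδl : ∀ j, Tendsto (fun k => δ (l k - (j + 1))) atTop (𝓝 0) := fun j =>
    tendsto_comp_zero_of_tendsto_windowMax hδ hdesc hMF (hφ j) ((hconv j).congr' (hsucc j))
  have hsum : Tendsto (fun k => ∑ j ∈ range (N + 1), δ (l (k + (N + 1)) - (j + 1)))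
      atTop (𝓝 0) := by
    have := (tendsto_finsetSum (range (N + 1)) fun j _ => hδl j).comp
      (tendsto_add_atTop_nat (N + 1))
    rwa [sum_const_zero] at this
  refine squeeze_zero hδ (fun k => ?_) hsum
  -- `k` is one of the `N + 1` indices preceding `l (k + (N + 1)) ∈ [k + 1, k + N + 1]`.
  have hj : l (k + (N + 1)) - 1 - k ∈ range (N + 1) :=
    mem_range.2 (by have := hl_le (k + (N + 1)); have := hl_ge (k + (N + 1)); omega)
  calc δ k = δ (l (k + (N + 1)) - (l (k + (N + 1)) - 1 - k + 1)) := by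
        congr 1; have := hl_ge (k + (N + 1)); omega
    _ ≤ _ := single_le_sum (f := fun j => δ (l (k + (N + 1)) - (j + 1))) (fun j _ => hδ _) hj

theorem not_isLocalMax_of_nonmonotone_descent {E : Type*} [PseudoMetricSpace E] {f : E → ℝ}
    {x : ℕ → E} {δ : ℕ → ℝ} {N : ℕ} {B : ℝ} {a : E} (hf : Continuous f)
    (hS : IsCompact {y | f y ≤ f (x 0)}) (hδ : ∀ k, 0 < δ k)
    (hdesc : ∀ k, f (x (k + 1)) + δ k ≤ windowMax (fun k => f (x k)) N k)
    (hstep : ∀ k, dist (x k) (x (k + 1)) ^ 2 ≤ B * δ k) (ha : MapClusterPt a atTop x) :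
    ¬ IsLocalMax f a := by
  have hM := antitone_windowMax (u := fun k => f (x k)) hdesc fun k => (hδ k).le
  have hxS : ∀ k, x k ∈ {y | f y ≤ f (x 0)} := fun k =>
    (self_le_windowMax k).trans ((hM k.zero_le).trans_eq windowMax_zero)
  have hδ0 : Tendsto δ atTop (𝓝 0) :=
    tendsto_zero_of_nonmonotone_descent (u := fun k => f (x k)) (fun k => (hδ k).le) hdesc
      ((hS.bddBelow_image hf.continuousOn).mono
        (Set.range_subset_iff.2 fun k => Set.mem_image_of_mem f (hxS k)))
      fun φ hφ =>
        (hS.uniformContinuousOn_of_continuous hf.continuousOn).tendsto_dist_of_tendsto_dist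
          (fun k => hxS _) (fun k => hxS _) (tendsto_dist_succ_of_sq_le hstep hφ)
  choose l hl_le hl_ge hl_eq using exists_windowMax_eq (u := fun k => f (x k)) (N := N)
  have hal : MapClusterPt a atTop (x ∘ l) := ha.of_tendsto_dist
    (tendsto_dist_of_tendsto_dist_succ (tendsto_dist_succ_of_sq_le (φ := id) hstep hδ0)
      hl_le hl_ge)
  have hle : ∀ k, f a ≤ windowMax (fun k => f (x k)) N k := fun k =>
    (isClosed_le hf continuous_const).mem_of_mapClusterPt ha
      (eventually_atTop.2 ⟨k, fun i hi => (self_le_windowMax i).trans (hM hi)⟩)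
  intro hmax
  obtain ⟨k, hk⟩ := (hal.frequently hmax).exists
  have hlt := (hle (k + N + 1)).trans_lt (windowMax_add_lt (u := fun k => f (x k)) hdesc hδ k)
  rw [hl_eq] at hlt
  exact hlt.not_ge hk

theorem norm_smul_sq_le {E : Type*} [SeminormedAddCommGroup E] [NormedSpace ℝ E] {d v : E}
    {t s c : ℝ} (ht : 0 ≤ t) (hts : t ≤ s) (hd : ‖d‖ ≤ c * ‖v‖) :
    ‖t • d‖ ^ 2 ≤ c ^ 2 * s * (t * ‖v‖ ^ 2) := by
  rw [norm_smul, Real.norm_of_nonneg ht]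
  have hd' : ‖d‖ ^ 2 ≤ (c * ‖v‖) ^ 2 := pow_le_pow_left₀ (norm_nonneg d) hd 2
  calc (t * ‖d‖) ^ 2 = t * t * ‖d‖ ^ 2 := by ring
    _ ≤ t * s * (c * ‖v‖) ^ 2 := by gcongr; exact mul_nonneg ht (ht.trans hts)
    _ = c ^ 2 * s * (t * ‖v‖ ^ 2) := by ring

theorem nmls_no_cluster_point_local_max_general (n : ℕ)
    (f : EuclideanSpace ℝ (Fin n) → ℝ)
    (g : EuclideanSpace ℝ (Fin n) → EuclideanSpace ℝ (Fin n))
    (hf : ContDiff ℝ 1 f)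
    (s ρ σ : ℝ) (hs : s ∈ Set.Ioc (0 : ℝ) 1) (hρ : ρ ∈ Set.Ioo (0 : ℝ) 1)
    (hσ : σ ∈ Set.Ioo (0 : ℝ) (1 / 2))
    (N : ℕ) (η : ℕ → ℝ) (hη : ∀ k, η k ∈ Set.Ico (0 : ℝ) 1)
    (x d : ℕ → EuclideanSpace ℝ (Fin n)) (α : ℕ → ℝ) (jk : ℕ → ℕ)
    (Tbar T fl : ℕ → ℝ)
    (hfl : ∀ k, fl k = (Finset.range (min k N + 1)).sup'
      Finset.nonempty_range_add_one (fun j => f (x (k - j))))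
    (hTsum : ∀ k, N ≤ k → Tbar k =
      (∑ j ∈ Finset.range N,
          (∏ i ∈ Finset.range j, η (k - 1 - i)) * (1 - η (k - j - 1)) * f (x (k - j)))
        + (∏ i ∈ Finset.range N, η (k - 1 - i)) * f (x (k - N)))
    (hTlt : ∀ k, k ≤ N - 1 → T k = fl k)
    (hTge : ∀ k, N ≤ k → T k = max (Tbar k) (f (x k)))
    (hjk : ∀ k, IsLeast {j : ℕ | f (x k + (s * ρ ^ j) • d k) ≤
      T k + σ * (s * ρ ^ j) * (inner ℝ (g (x k)) (d k) : ℝ)} (jk k))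
    (hα : ∀ k, α k = s * ρ ^ (jk k))
    (hx : ∀ k, x (k + 1) = x k + α k • d k)
    (H1 : Bornology.IsBounded {y : EuclideanSpace ℝ (Fin n) | f y ≤ f (x 0)})
    (H3 : ∃ c₁ c₂ : ℝ, 0 < c₁ ∧ c₁ < 1 ∧ 1 < c₂ ∧
      ∀ k, (inner ℝ (g (x k)) (d k) : ℝ) ≤ -c₁ * ‖g (x k)‖ ^ 2 ∧
        ‖d k‖ ≤ c₂ * ‖g (x k)‖)
    (hnz : ∀ k, g (x k) ≠ 0) :
    ∀ xstar : EuclideanSpace ℝ (Fin n),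
      MapClusterPt xstar Filter.atTop x → ¬ IsLocalMax f xstar := by
  obtain ⟨c₁, c₂, hc₁, -, -, hdir⟩ := H3
  intro xstar hxstar
  have hα_pos : ∀ k, 0 < α k := fun k => (hα k).symm ▸ mul_pos hs.1 (pow_pos hρ.1 _)
  have hα_le : ∀ k, α k ≤ s := fun k =>
    (hα k).symm ▸ mul_le_of_le_one_right hs.1.le (pow_le_one₀ hρ.1.le hρ.2.le)
  set δ : ℕ → ℝ := fun k => σ * c₁ * (α k * ‖g (x k)‖ ^ 2) with hδ_def
  have hδ : ∀ k, 0 < δ k := fun k => mul_pos (mul_pos hσ.1 hc₁)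
    (mul_pos (hα_pos k) (pow_pos (norm_pos_iff.2 (hnz k)) 2))
  have hdesc : ∀ k, f (x (k + 1)) + δ k ≤ windowMax (fun k => f (x k)) N k := fun k => by
    have harm := (hjk k).1
    rw [Set.mem_ofPred_eq, ← hα, ← hx] at harm
    have hT := reference_le_windowMax (u := fun k => f (x k)) hη hTsum
      (fun k hk => (hTlt k hk).trans (hfl k)) hTge k
    nlinarith [mul_le_mul_of_nonneg_left (hdir k).1 (mul_nonneg hσ.1.le (hα_pos k).le)]
  have hstep : ∀ k, dist (x k) (x (k + 1)) ^ 2 ≤ c₂ ^ 2 * s / (σ * c₁) * δ k := fun k =>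
    calc dist (x k) (x (k + 1)) ^ 2 = ‖α k • d k‖ ^ 2 := by rw [hx, dist_self_add_right]
      _ ≤ c₂ ^ 2 * s * (α k * ‖g (x k)‖ ^ 2) :=
        norm_smul_sq_le (hα_pos k).le (hα_le k) (hdir k).2
      _ = c₂ ^ 2 * s / (σ * c₁) * δ k := by
          simp only [hδ_def]
          field_simp [hσ.1.ne', hc₁.ne']
  exact not_isLocalMax_of_nonmonotone_descent hf.continuous
    (Metric.isCompact_of_isClosed_isBounded (isClosed_le hf.continuous continuous_const) H1)
    hδ hdesc hstep hxstar

/-- Second assertion of Theorem 1: under (H1)–(H3) and with nonzero gradients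
at every iterate, no cluster point of the sequence generated by the nonmonotone
Armijo-type line search is a local maximizer of `f`. -/
theorem nmls_no_cluster_point_local_max (n : ℕ) (hn : 1 ≤ n)
    (f : EuclideanSpace ℝ (Fin n) → ℝ)
    (g : EuclideanSpace ℝ (Fin n) → EuclideanSpace ℝ (Fin n))
    (hf : ContDiff ℝ 1 f) (hg : ∀ y, HasGradientAt f (g y) y)
    (s ρ σ : ℝ) (hs : s ∈ Set.Ioc (0 : ℝ) 1) (hρ : ρ ∈ Set.Ioo (0 : ℝ) 1)
    (hσ : σ ∈ Set.Ioo (0 : ℝ) (1 / 2))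
    (N : ℕ) (hN : 1 ≤ N) (η : ℕ → ℝ) (hη : ∀ k, η k ∈ Set.Ico (0 : ℝ) 1)
    (x d : ℕ → EuclideanSpace ℝ (Fin n)) (α : ℕ → ℝ) (jk : ℕ → ℕ)
    (Tbar T fl : ℕ → ℝ)
    (hfl : ∀ k, fl k = (Finset.range (min k N + 1)).sup'
      Finset.nonempty_range_add_one (fun j => f (x (k - j))))
    (hT0 : Tbar 0 = f (x 0))
    (hTrec : ∀ k, 1 ≤ k → k ≤ N - 1 →
      Tbar k = (1 - η (k - 1)) * f (x k) + η (k - 1) * Tbar (k - 1))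
    (hTsum : ∀ k, N ≤ k → Tbar k =
      (∑ j ∈ Finset.range N,
          (∏ i ∈ Finset.range j, η (k - 1 - i)) * (1 - η (k - j - 1)) * f (x (k - j)))
        + (∏ i ∈ Finset.range N, η (k - 1 - i)) * f (x (k - N)))
    (hTlt : ∀ k, k ≤ N - 1 → T k = fl k)
    (hTge : ∀ k, N ≤ k → T k = max (Tbar k) (f (x k)))
    (hjk : ∀ k, IsLeast {j : ℕ | f (x k + (s * ρ ^ j) • d k) ≤
      T k + σ * (s * ρ ^ j) * (inner ℝ (g (x k)) (d k) : ℝ)} (jk k))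
    (hα : ∀ k, α k = s * ρ ^ (jk k))
    (hx : ∀ k, x (k + 1) = x k + α k • d k)
    (H1 : Bornology.IsBounded {y : EuclideanSpace ℝ (Fin n) | f y ≤ f (x 0)})
    (H2 : ∃ C : Set (EuclideanSpace ℝ (Fin n)), IsOpen C ∧ Convex ℝ C ∧
      {y : EuclideanSpace ℝ (Fin n) | f y ≤ f (x 0)} ⊆ C ∧
      ∃ L > (0 : ℝ), ∀ a ∈ C, ∀ b ∈ C, ‖g a - g b‖ ≤ L * ‖a - b‖)
    (H3 : ∃ c₁ c₂ : ℝ, 0 < c₁ ∧ c₁ < 1 ∧ 1 < c₂ ∧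
      ∀ k, (inner ℝ (g (x k)) (d k) : ℝ) ≤ -c₁ * ‖g (x k)‖ ^ 2 ∧
        ‖d k‖ ≤ c₂ * ‖g (x k)‖)
    (hnz : ∀ k, g (x k) ≠ 0) :
    ∀ xstar : EuclideanSpace ℝ (Fin n),
      MapClusterPt xstar Filter.atTop x → ¬ IsLocalMax f xstar :=
  nmls_no_cluster_point_local_max_general n f g hf s ρ σ hs hρ hσ N η hη x d α jk Tbar T fl hfl
    hTsum hTlt hTge hjk hα hx H1 H3 hnz
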